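/- arXiv:2009.11282 — 2 statements merged into one kernel-verified Lean document; each statement's English description precedes it below -/
import Mathlib

section
/- Let w(x) = ∫_{-x}^{x} t² φ(t) dt where φ is the standard Gaussian density. Then for all 0 < x ≤ y, w(x)/w(y) ≤ x²/y² provided the function g(x) = w(x)/x² is nondecreasing on (0,y]; more concretely, for 0 < x ≤ y ≤ 1.35 one has w(x)·y² ≤ w(y)·x². -/
/-!
With g(x) = w(x)/x², one has x³ g'(x) = 2 (x³φ(x) - w(x)) =: 2 h(x). Since h(0) = 0 and
h'(x) = (x² - x⁴) φ(x), h increases on [0, 1] and decreases afterwards, so h ≥ 0 on [0, b]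
as soon as h(b) ≥ 0. For b = 1.35 this is a numerical inequality, obtained from the
alternating Taylor bound e^{-u} ≤ 1 - u + u²/2 - u³/6 + u⁴/24 for u ≥ 0.
-/

open Real

/-- The standard Gaussian density. -/
noncomputable def gaussPhi (t : ℝ) : ℝ := (Real.sqrt (2 * Real.pi))⁻¹ * Real.exp (-t ^ 2 / 2)

/-- w(x) = ∫_{-x}^{x} t² φ(t) dt. -/
noncomputable def wfun (x : ℝ) : ℝ := ∫ t in (-x)..x, t ^ 2 * gaussPhi t

open Set

theorem hasDerivAt_integral_neg_self {E : Type*} [NormedAddCommGroup E] [NormedSpace ℝ E]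
    [CompleteSpace E] {f : ℝ → E} (hf : Continuous f) (x : ℝ) :
    HasDerivAt (fun x => ∫ t in (-x)..x, f t) (f x + f (-x)) x := by
  have hsplit : (fun x => ∫ t in (-x)..x, f t) =
      fun x => (∫ t in (0 : ℝ)..x, f t) - ∫ t in (0 : ℝ)..(-x), f t := by
    funext x
    rw [intervalIntegral.integral_interval_sub_left (hf.intervalIntegrable _ _)
      (hf.intervalIntegrable _ _)]
  have hneg : HasDerivAt (fun x => ∫ t in (0 : ℝ)..(-x), f t) (-f (-x)) x :=
    ((hf.integral_hasStrictDerivAt 0 (-x)).hasDerivAt.scomp x (hasDerivAt_neg x)).congr_deriv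
      (by simp)
  rw [hsplit]
  exact ((hf.integral_hasStrictDerivAt 0 x).hasDerivAt.sub hneg).congr_deriv (sub_neg_eq_add _ _)

theorem monotoneOn_div_pow_of_le_mul_deriv {F F' : ℝ → ℝ} {s : Set ℝ} (n : ℕ) (hs : Convex ℝ s)
    (hs_pos : s ⊆ Ioi 0) (hF : ∀ x ∈ s, HasDerivAt F (F' x) x)
    (hF' : ∀ x ∈ interior s, n * F x ≤ x * F' x) :
    MonotoneOn (fun x => F x / x ^ n) s := by
  have hderiv : ∀ x ∈ s, HasDerivAt (fun x => F x / x ^ n)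
      ((F' x * x ^ n - F x * (n * x ^ (n - 1))) / (x ^ n) ^ 2) x := fun x hx =>
    (hF x hx).div (hasDerivAt_pow n x) (pow_ne_zero n (hs_pos hx).ne')
  refine monotoneOn_of_hasDerivWithinAt_nonneg hs
    (fun x hx => (hderiv x hx).continuousAt.continuousWithinAt)
    (fun x hx => (hderiv x (interior_subset hx)).hasDerivWithinAt) fun x hxs => ?_
  have hx : 0 < x := hs_pos (interior_subset hxs)
  have hpow : x * (n * x ^ (n - 1)) = n * x ^ n := by
    rcases n with _ | n
    · simp
    · simp only [Nat.add_sub_cancel, pow_succ]; ring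
  have hnum : x * (F' x * x ^ n - F x * (n * x ^ (n - 1))) = x ^ n * (x * F' x - n * F x) := by
    linear_combination (-F x) * hpow
  apply div_nonneg _ (by positivity)
  rw [← mul_nonneg_iff_of_pos_left hx, hnum]
  exact mul_nonneg (by positivity) (sub_nonneg.mpr (hF' x hxs))

theorem nonneg_of_monotoneOn_of_antitoneOn {h : ℝ → ℝ} {a m b x : ℝ}
    (h_mono : MonotoneOn h (Icc a m)) (h_anti : AntitoneOn h (Icc m b))
    (ha : 0 ≤ h a) (hb : 0 ≤ h b) (hx : x ∈ Icc a b) : 0 ≤ h x := by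
  rcases le_total x m with hxm | hmx
  · exact ha.trans (h_mono ⟨le_rfl, hx.1.trans hxm⟩ ⟨hx.1, hxm⟩ hx.1)
  · exact hb.trans (h_anti ⟨hmx, hx.2⟩ ⟨hmx.trans hx.2, le_rfl⟩ hx.2)

theorem gaussPhi_pos (t : ℝ) : 0 < gaussPhi t := by
  unfold gaussPhi; positivity

theorem gaussPhi_neg (t : ℝ) : gaussPhi (-t) = gaussPhi t := by
  simp [gaussPhi]

theorem hasDerivAt_gaussPhi (x : ℝ) : HasDerivAt gaussPhi (-x * gaussPhi x) x := by
  have h : HasDerivAt (fun t : ℝ => -t ^ 2 / 2) (-x) x :=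
    ((hasDerivAt_pow 2 x).neg.div_const 2).congr_deriv (by ring)
  exact (h.exp.const_mul (Real.sqrt (2 * Real.pi))⁻¹).congr_deriv (by unfold gaussPhi; ring)

theorem hasDerivAt_wfun (x : ℝ) : HasDerivAt wfun (2 * (x ^ 2 * gaussPhi x)) x := by
  have hf : Continuous fun t : ℝ => t ^ 2 * gaussPhi t := by
    unfold gaussPhi; fun_prop
  refine (hasDerivAt_integral_neg_self hf x).congr_deriv ?_
  rw [gaussPhi_neg, neg_sq]; ring

theorem wfun_zero : wfun 0 = 0 := by
  simp [wfun]

theorem exp_neg_le_taylor {u : ℝ} (hu : 0 ≤ u) :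
    Real.exp (-u) ≤ 1 - u + u ^ 2 / 2 - u ^ 3 / 6 + u ^ 4 / 24 := by
  have hQ : 1 + u + u ^ 2 / 2 + u ^ 3 / 6 + u ^ 4 / 24 + u ^ 5 / 120 ≤ Real.exp u := by
    have := Real.sum_le_exp_of_nonneg hu 6
    norm_num [Finset.sum_range_succ, Nat.factorial] at this
    linarith
  have hQpos : 0 < 1 + u + u ^ 2 / 2 + u ^ 3 / 6 + u ^ 4 / 24 + u ^ 5 / 120 := by positivity
  calc Real.exp (-u) = (Real.exp u)⁻¹ := Real.exp_neg u
    _ ≤ (1 + u + u ^ 2 / 2 + u ^ 3 / 6 + u ^ 4 / 24 + u ^ 5 / 120)⁻¹ := inv_anti₀ hQpos hQ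
    _ ≤ _ := by
      rw [inv_le_iff_one_le_mul₀ hQpos]
      nlinarith [pow_nonneg hu 5, pow_nonneg hu 6, pow_nonneg hu 7, pow_nonneg hu 8,
        pow_nonneg hu 9, sq_nonneg u, sq_nonneg (1 - u), mul_nonneg hu hu]

theorem le_exp_neg_729_div_800 : (0.40192 : ℝ) ≤ Real.exp (-(729 / 800)) := by
  have hb := Real.exp_bound' (x := 729 / 800) (by norm_num) (by norm_num) (n := 7) (by norm_num)
  norm_num [Finset.sum_range_succ, Nat.factorial] at hb
  rw [Real.exp_neg, le_inv_comm₀ (by norm_num) (Real.exp_pos _)]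
  linarith

-- Needed: the integral is at most 1.35³ · 0.40192 ≈ 0.9889. Integrating the degree-four Taylor
-- bound gives 0.9792; the degree-two bound would only give 1.035.
theorem integral_sq_mul_exp_le :
    ∫ t in (-1.35 : ℝ)..1.35, t ^ 2 * Real.exp (-t ^ 2 / 2) ≤ 0.9793 := by
  have hF : ∀ t ∈ uIcc (-1.35 : ℝ) 1.35,
      HasDerivAt (fun t : ℝ => t ^ 3 / 3 - t ^ 5 / 10 + t ^ 7 / 56 - t ^ 9 / 432 + t ^ 11 / 4224)
        (t ^ 2 - t ^ 4 / 2 + t ^ 6 / 8 - t ^ 8 / 48 + t ^ 10 / 384) t := by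
    intro t _
    refine (((((hasDerivAt_pow 3 t).div_const 3).sub ((hasDerivAt_pow 5 t).div_const 10)).add
      ((hasDerivAt_pow 7 t).div_const 56)).sub ((hasDerivAt_pow 9 t).div_const 432)).add
      ((hasDerivAt_pow 11 t).div_const 4224) |>.congr_deriv ?_
    push_cast; ring
  calc ∫ t in (-1.35 : ℝ)..1.35, t ^ 2 * Real.exp (-t ^ 2 / 2)
      ≤ ∫ t in (-1.35 : ℝ)..1.35, (t ^ 2 - t ^ 4 / 2 + t ^ 6 / 8 - t ^ 8 / 48 + t ^ 10 / 384) := by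
        refine intervalIntegral.integral_mono_on (by norm_num)
          (Continuous.intervalIntegrable (by fun_prop) _ _)
          (Continuous.intervalIntegrable (by fun_prop) _ _)
          fun t _ => ?_
        calc t ^ 2 * Real.exp (-t ^ 2 / 2) = t ^ 2 * Real.exp (-(t ^ 2 / 2)) := by ring_nf
          _ ≤ t ^ 2 * (1 - t ^ 2 / 2 + (t ^ 2 / 2) ^ 2 / 2 - (t ^ 2 / 2) ^ 3 / 6
                + (t ^ 2 / 2) ^ 4 / 24) := by gcongr; exact exp_neg_le_taylor (by positivity)
          _ = _ := by ring
    _ ≤ 0.9793 := by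
        rw [intervalIntegral.integral_eq_sub_of_hasDerivAt hF
          (Continuous.intervalIntegrable (by fun_prop) _ _)]
        norm_num

theorem wfun_le_cube_mul_gaussPhi_one_point_three_five :
    wfun 1.35 ≤ (1.35 : ℝ) ^ 3 * gaussPhi 1.35 := by
  set c := (Real.sqrt (2 * Real.pi))⁻¹
  have hc : 0 < c := by positivity
  have hw : wfun 1.35 = c * ∫ t in (-1.35 : ℝ)..1.35, t ^ 2 * Real.exp (-t ^ 2 / 2) := by
    rw [wfun, ← intervalIntegral.integral_const_mul]
    simp only [gaussPhi]
    congr 1; funext t; ring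
  have hphi : gaussPhi 1.35 = c * Real.exp (-(729 / 800)) := by
    rw [gaussPhi]; congr 1; norm_num
  rw [hw, hphi]
  nlinarith [integral_sq_mul_exp_le, le_exp_neg_729_div_800]

theorem hasDerivAt_cube_mul_gaussPhi_sub_wfun (x : ℝ) :
    HasDerivAt (fun x => x ^ 3 * gaussPhi x - wfun x) ((x ^ 2 - x ^ 4) * gaussPhi x) x :=
  (((hasDerivAt_pow 3 x).mul (hasDerivAt_gaussPhi x)).sub (hasDerivAt_wfun x)).congr_deriv
    (by push_cast; ring)

theorem wfun_le_cube_mul_gaussPhi {x : ℝ} (hx : x ∈ Icc 0 1.35) :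
    wfun x ≤ x ^ 3 * gaussPhi x := by
  set h := fun x => x ^ 3 * gaussPhi x - wfun x
  have hcont : Continuous h := continuous_iff_continuousAt.mpr fun x =>
    (hasDerivAt_cube_mul_gaussPhi_sub_wfun x).continuousAt
  have h_mono : MonotoneOn h (Icc 0 1) := by
    refine monotoneOn_of_hasDerivWithinAt_nonneg (convex_Icc 0 1) hcont.continuousOn
      (fun t _ => (hasDerivAt_cube_mul_gaussPhi_sub_wfun t).hasDerivWithinAt) fun t ht => ?_
    rw [interior_Icc] at ht
    have : 0 ≤ t ^ 2 * (1 - t ^ 2) := mul_nonneg (sq_nonneg t) (by nlinarith [ht.1, ht.2])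
    exact mul_nonneg (by linarith) (gaussPhi_pos t).le
  have h_anti : AntitoneOn h (Icc 1 1.35) := by
    refine antitoneOn_of_hasDerivWithinAt_nonpos (convex_Icc 1 1.35) hcont.continuousOn
      (fun t _ => (hasDerivAt_cube_mul_gaussPhi_sub_wfun t).hasDerivWithinAt) fun t ht => ?_
    rw [interior_Icc] at ht
    have : t ^ 2 * (1 - t ^ 2) ≤ 0 :=
      mul_nonpos_of_nonneg_of_nonpos (sq_nonneg t) (by nlinarith [ht.1, ht.2])
    exact mul_nonpos_of_nonpos_of_nonneg (by linarith) (gaussPhi_pos t).le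
  have h_zero : 0 ≤ h 0 := by simp [h, wfun_zero]
  have h_end : 0 ≤ h 1.35 := sub_nonneg.mpr wfun_le_cube_mul_gaussPhi_one_point_three_five
  exact sub_nonneg.mp (nonneg_of_monotoneOn_of_antitoneOn (h := h) h_mono h_anti h_zero h_end hx)

theorem monotoneOn_wfun_div_sq : MonotoneOn (fun x => wfun x / x ^ 2) (Ioc 0 1.35) := by
  refine monotoneOn_div_pow_of_le_mul_deriv 2 (convex_Ioc 0 1.35) Ioc_subset_Ioi_self
    (fun x _ => hasDerivAt_wfun x) fun x hx => ?_
  rw [interior_Ioc] at hx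
  have := wfun_le_cube_mul_gaussPhi ⟨hx.1.le, hx.2.le⟩
  push_cast
  nlinarith

/-- For 0 < x ≤ y ≤ 1.35 one has w(x)·y² ≤ w(y)·x², i.e. w(x)/w(y) ≤ x²/y². -/
theorem stmt0 (x y : ℝ) (hx : 0 < x) (hxy : x ≤ y) (hy : y ≤ 1.35) :
    wfun x * y ^ 2 ≤ wfun y * x ^ 2 := by
  have hy0 : 0 < y := hx.trans_le hxy
  have hg := monotoneOn_wfun_div_sq ⟨hx, hxy.trans hy⟩ ⟨hy0, hy⟩ hxy
  rwa [div_le_div_iff₀ (by positivity) (by positivity)] at hg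
end

section
/- Let M_i = U_i Σ_i V_iᵀ for i = 1,…,K where U_i, V_i have orthonormal columns and Σ_i is diagonal with positive entries. If ‖U_iᵀU_j‖_F ≤ 1/(2√K Γ) and ‖V_iᵀV_j‖_F ≤ 1/(2√K Γ) for all i ≠ j, then |⟨M_i, M_j⟩| ≤ (1/(4KΓ²)) ‖M_i‖_F ‖M_j‖_F for all i ≠ j. -/
/-!
By the trace identity, `⟨U X Vᵀ, U' Y V'ᵀ⟩ = ⟨X, (UᵀU') Y (V'ᵀV)⟩`. Cauchy–Schwarz and
submultiplicativity of the Frobenius norm bound the right side by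
`‖UᵀU'‖_F ‖VᵀV'‖_F ‖X‖_F ‖Y‖_F`, and the same identity with orthonormal `U`, `V` gives
`‖U X Vᵀ‖_F = ‖X‖_F`, so `‖M_i‖_F = ‖Σ_i‖_F`.
-/

open Matrix Finset

/-- Euclidean norm of a vector. -/
noncomputable def euclEnorm {ι : Type*} [Fintype ι] (x : ι → ℝ) : ℝ :=
  Real.sqrt (∑ i, x i ^ 2)

/-- Frobenius norm of a matrix. -/
noncomputable def frob {ι κ : Type*} [Fintype ι] [Fintype κ] (A : Matrix ι κ ℝ) : ℝ :=
  Real.sqrt (∑ i, ∑ j, A i j ^ 2)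

/-- Matrix inner product ⟨A,B⟩ = Tr(AᵀB). -/
noncomputable def minner {ι κ : Type*} [Fintype ι] [Fintype κ] (A B : Matrix ι κ ℝ) : ℝ :=
  ∑ i, ∑ j, A i j * B i j

/-- The k-th largest singular value, via the Courant–Fischer max-min characterization. -/
noncomputable def sval {ι κ : Type*} [Fintype ι] [Fintype κ] (A : Matrix ι κ ℝ) (k : ℕ) : ℝ :=
  sSup {t : ℝ | ∃ V : Submodule ℝ (κ → ℝ), Module.finrank ℝ V = k ∧
    ∀ x ∈ V, t * euclEnorm x ≤ euclEnorm (A.mulVec x)}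

/-- Spectral (operator) norm = largest singular value. -/
noncomputable def spec {ι κ : Type*} [Fintype ι] [Fintype κ] (A : Matrix ι κ ℝ) : ℝ :=
  sval A 1

section Frobenius

variable {ι κ μ ν μ' ν' : Type*} [Fintype ι] [Fintype κ] [Fintype μ] [Fintype ν] [Fintype μ']
  [Fintype ν']

attribute [local instance] Matrix.frobeniusNormedAddCommGroup

lemma frob_eq_frobenius_norm (A : Matrix ι κ ℝ) : frob A = ‖A‖ := by
  simp [frob, Matrix.frobenius_norm_def, Real.sqrt_eq_rpow]

lemma frob_nonneg (A : Matrix ι κ ℝ) : 0 ≤ frob A :=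
  Real.sqrt_nonneg _

lemma frob_transpose (A : Matrix ι κ ℝ) : frob Aᵀ = frob A := by
  simp only [frob_eq_frobenius_norm, Matrix.frobenius_norm_transpose]

lemma frob_mul_le (A : Matrix ι κ ℝ) (B : Matrix κ μ ℝ) : frob (A * B) ≤ frob A * frob B := by
  simpa only [frob_eq_frobenius_norm] using Matrix.frobenius_norm_mul A B

lemma frob_eq_sqrt_minner_self (A : Matrix ι κ ℝ) : frob A = √(minner A A) := by
  simp [frob, minner, sq]

lemma abs_minner_le_frob_mul_frob (A B : Matrix ι κ ℝ) : |minner A B| ≤ frob A * frob B := by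
  simp only [minner, frob, ← Fintype.sum_prod_type']
  rw [← Real.sqrt_mul (by positivity), ← Real.sqrt_sq_eq_abs]
  exact Real.sqrt_le_sqrt (Finset.sum_mul_sq_le_sq_mul_sq _ _ _)

lemma minner_eq_trace (A B : Matrix ι κ ℝ) : minner A B = (Aᵀ * B).trace := by
  simp only [minner, Matrix.trace, Matrix.diag, Matrix.mul_apply, Matrix.transpose_apply]
  rw [Finset.sum_comm]

lemma minner_mul_mul_transpose (U : Matrix ι μ ℝ) (X : Matrix μ ν ℝ) (V : Matrix κ ν ℝ)
    (U' : Matrix ι μ' ℝ) (Y : Matrix μ' ν' ℝ) (V' : Matrix κ ν' ℝ) :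
    minner (U * X * Vᵀ) (U' * Y * V'ᵀ) = minner X (Uᵀ * U' * Y * (V'ᵀ * V)) := by
  rw [minner_eq_trace, minner_eq_trace]
  simp only [Matrix.transpose_mul, Matrix.transpose_transpose, Matrix.mul_assoc]
  rw [Matrix.trace_mul_comm V]
  simp only [Matrix.mul_assoc]

lemma frob_mul_mul_transpose_of_orthonormal [DecidableEq μ] [DecidableEq ν] {U : Matrix ι μ ℝ}
    {V : Matrix κ ν ℝ} (hU : Uᵀ * U = 1) (hV : Vᵀ * V = 1) (X : Matrix μ ν ℝ) :
    frob (U * X * Vᵀ) = frob X := by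
  rw [frob_eq_sqrt_minner_self, frob_eq_sqrt_minner_self, minner_mul_mul_transpose, hU, hV,
    Matrix.one_mul, Matrix.mul_one]

lemma abs_minner_mul_mul_transpose_le (U : Matrix ι μ ℝ) (X : Matrix μ ν ℝ) (V : Matrix κ ν ℝ)
    (U' : Matrix ι μ' ℝ) (Y : Matrix μ' ν' ℝ) (V' : Matrix κ ν' ℝ) :
    |minner (U * X * Vᵀ) (U' * Y * V'ᵀ)| ≤
      frob (Uᵀ * U') * frob (Vᵀ * V') * frob X * frob Y := by
  have hV : frob (V'ᵀ * V) = frob (Vᵀ * V') := by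
    rw [← frob_transpose, Matrix.transpose_mul, Matrix.transpose_transpose]
  calc |minner (U * X * Vᵀ) (U' * Y * V'ᵀ)|
      = |minner X (Uᵀ * U' * Y * (V'ᵀ * V))| := by rw [minner_mul_mul_transpose]
    _ ≤ frob X * (frob (Uᵀ * U' * Y) * frob (V'ᵀ * V)) :=
        (abs_minner_le_frob_mul_frob _ _).trans
          (mul_le_mul_of_nonneg_left (frob_mul_le _ _) (frob_nonneg _))
    _ ≤ frob X * (frob (Uᵀ * U') * frob Y * frob (V'ᵀ * V)) := by
        gcongr
        exacts [frob_nonneg _, frob_nonneg _, frob_mul_le _ _]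
    _ = frob (Uᵀ * U') * frob (Vᵀ * V') * frob X * frob Y := by rw [hV]; ring

end Frobenius

lemma one_div_mul_self_two_mul_sqrt_mul (K : ℕ) (Γ : ℝ) :
    1 / (2 * √K * Γ) * (1 / (2 * √K * Γ)) = 1 / (4 * K * Γ ^ 2) := by
  rw [div_mul_div_comm, one_mul,
    show 2 * √K * Γ * (2 * √K * Γ) = 4 * (√K * √K) * Γ ^ 2 by ring,
    Real.mul_self_sqrt (Nat.cast_nonneg K)]

theorem stmt3_general (n₁ n₂ K : ℕ) (Γ : ℝ) (r : Fin K → ℕ)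
    (U : ∀ k : Fin K, Matrix (Fin n₁) (Fin (r k)) ℝ)
    (V : ∀ k : Fin K, Matrix (Fin n₂) (Fin (r k)) ℝ)
    (d : ∀ k : Fin K, Fin (r k) → ℝ)
    (M : Fin K → Matrix (Fin n₁) (Fin n₂) ℝ)
    (hU : ∀ k, (U k)ᵀ * U k = 1) (hV : ∀ k, (V k)ᵀ * V k = 1)
    (hM : ∀ k, M k = U k * Matrix.diagonal (d k) * (V k)ᵀ)
    (hUcross : ∀ i j, i ≠ j → frob ((U i)ᵀ * U j) ≤ 1 / (2 * Real.sqrt K * Γ))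
    (hVcross : ∀ i j, i ≠ j → frob ((V i)ᵀ * V j) ≤ 1 / (2 * Real.sqrt K * Γ)) :
    ∀ i j, i ≠ j → |minner (M i) (M j)| ≤ 1 / (4 * K * Γ ^ 2) * frob (M i) * frob (M j) := by
  intro i j hij
  have hfrob : ∀ k, frob (M k) = frob (Matrix.diagonal (d k)) := fun k => by
    rw [hM k, frob_mul_mul_transpose_of_orthonormal (hU k) (hV k)]
  rw [hfrob, hfrob, ← one_div_mul_self_two_mul_sqrt_mul, hM, hM]
  calc _ ≤ frob ((U i)ᵀ * U j) * frob ((V i)ᵀ * V j) *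
        frob (Matrix.diagonal (d i)) * frob (Matrix.diagonal (d j)) :=
        abs_minner_mul_mul_transpose_le _ _ _ _ _ _
    _ ≤ _ := by
        have hbound_nonneg := (frob_nonneg ((U i)ᵀ * U j)).trans (hUcross i j hij)
        gcongr
        exacts [frob_nonneg _, frob_nonneg _, frob_nonneg _, hUcross i j hij, hVcross i j hij]

/-- Stmt 3: if M_i = U_i Σ_i V_iᵀ with orthonormal U_i, V_i, positive diagonal Σ_i, and
‖U_iᵀU_j‖_F, ‖V_iᵀV_j‖_F ≤ 1/(2√K Γ) for i ≠ j, then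
|⟨M_i,M_j⟩| ≤ (1/(4KΓ²))‖M_i‖_F‖M_j‖_F for i ≠ j. -/
theorem stmt3 (n₁ n₂ K : ℕ) (Γ : ℝ) (hΓ : 0 < Γ) (r : Fin K → ℕ)
    (U : ∀ k : Fin K, Matrix (Fin n₁) (Fin (r k)) ℝ)
    (V : ∀ k : Fin K, Matrix (Fin n₂) (Fin (r k)) ℝ)
    (d : ∀ k : Fin K, Fin (r k) → ℝ)
    (M : Fin K → Matrix (Fin n₁) (Fin n₂) ℝ)
    (hU : ∀ k, (U k)ᵀ * U k = 1) (hV : ∀ k, (V k)ᵀ * V k = 1)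
    (hd : ∀ k j, 0 < d k j)
    (hM : ∀ k, M k = U k * Matrix.diagonal (d k) * (V k)ᵀ)
    (hUcross : ∀ i j, i ≠ j → frob ((U i)ᵀ * U j) ≤ 1 / (2 * Real.sqrt K * Γ))
    (hVcross : ∀ i j, i ≠ j → frob ((V i)ᵀ * V j) ≤ 1 / (2 * Real.sqrt K * Γ)) :
    ∀ i j, i ≠ j → |minner (M i) (M j)| ≤ 1 / (4 * K * Γ ^ 2) * frob (M i) * frob (M j) :=
  stmt3_general n₁ n₂ K Γ r U V d M hU hV hM hUcross hVcross
end
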